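/- Let X ⊆ ℝⁿ be a compact set equipped with a finite Whitney (a)-regular stratification, and let f : ℝⁿ → ℝᵏ be a smooth map that is a submersion on an open neighborhood of X. Then the set Σ_f^X of stratified critical points of f restricted to X (the union over all strata S of the critical points of f restricted to S) is a closed, hence compact, subset of X. -/

import Mathlib

open Set Filter Topology Metric MeasureTheory Module Submodule ENNReal
open RealInnerProductSpace

noncomputable section

/-- Euclidean space `ℝⁿ`. -/
abbrev Euc (n : ℕ) : Type := EuclideanSpace ℝ (Fin n)

/-- The tangent space of a set `S` at a point `x`: the linear span of the tangent cone.
For a smooth submanifold this is the usual tangent space. -/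
def tangentSpaceAt {E : Type*} [NormedAddCommGroup E] [NormedSpace ℝ E]
    (S : Set E) (x : E) : Submodule ℝ E :=
  Submodule.span ℝ (tangentConeAt ℝ S x)

/-- `S` is a smooth submanifold of codimension `c`: locally it is the zero set of a
smooth map to `ℝᶜ` which is a submersion. -/
def IsSubmanifoldCodim {E : Type*} [NormedAddCommGroup E] [NormedSpace ℝ E]
    (S : Set E) (c : ℕ) : Prop :=
  ∀ x ∈ S, ∃ (f : E → EuclideanSpace ℝ (Fin c)) (U : Set E),
    IsOpen U ∧ x ∈ U ∧ ContDiffOn ℝ (⊤ : ℕ∞) f U ∧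
    (∀ y ∈ U, Function.Surjective (fderiv ℝ f y)) ∧
    S ∩ U = {y ∈ U | f y = 0}

/-- An o-minimal structure (expanding the ordered real field): a collection of
"definable" subsets of the spaces `ℝᵐ`, closed under boolean operations, coordinate
projections and cylinders, containing the basic (semi)algebraic sets, and such that
the definable subsets of `ℝ` are finite unions of points and open intervals. -/
structure OminStructure : Type 1 where
  Defin : ∀ {m : ℕ}, Set (EuclideanSpace ℝ (Fin m)) → Prop
  defin_empty : ∀ m, Defin (∅ : Set (EuclideanSpace ℝ (Fin m)))
  defin_union : ∀ {m : ℕ} {A B : Set (EuclideanSpace ℝ (Fin m))},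
    Defin A → Defin B → Defin (A ∪ B)
  defin_compl : ∀ {m : ℕ} {A : Set (EuclideanSpace ℝ (Fin m))}, Defin A → Defin Aᶜ
  defin_proj : ∀ {m : ℕ} {A : Set (EuclideanSpace ℝ (Fin (m + 1)))}, Defin A →
      Defin ((fun (x : EuclideanSpace ℝ (Fin (m + 1))) => WithLp.toLp 2 (fun (i : Fin m) => x i.castSucc)) '' A)
  defin_cyl : ∀ {m : ℕ} {A : Set (EuclideanSpace ℝ (Fin m))}, Defin A →
      Defin {x : EuclideanSpace ℝ (Fin (m + 1)) | WithLp.toLp 2 (fun i : Fin m => x i.castSucc) ∈ A}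
  defin_lt : ∀ {m : ℕ} (i j : Fin m), Defin {x : EuclideanSpace ℝ (Fin m) | x i < x j}
  defin_add : ∀ {m : ℕ} (i j l : Fin m), Defin {x : EuclideanSpace ℝ (Fin m) | x i + x j = x l}
  defin_mul : ∀ {m : ℕ} (i j l : Fin m), Defin {x : EuclideanSpace ℝ (Fin m) | x i * x j = x l}
  tame : ∀ {A : Set (EuclideanSpace ℝ (Fin 1))}, Defin A →
    ∃ F : Finset (Set ℝ), ((fun x : EuclideanSpace ℝ (Fin 1) => x 0) '' A) = ⋃₀ ↑F ∧
      ∀ I ∈ F, (∃ a : ℝ, I = {a}) ∨ (∃ a b : ℝ, I = Set.Ioo a b) ∨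
        (∃ a, I = Set.Iio a) ∨ (∃ a, I = Set.Ioi a) ∨ I = Set.univ

/-- A map is definable if its graph is definable. -/
def OminStructure.DefinMap (O : OminStructure) {n k : ℕ} (f : Euc n → Euc k) : Prop :=
  O.Defin {z : EuclideanSpace ℝ (Fin (n + k)) |
    f (WithLp.toLp 2 (fun i : Fin n => z (Fin.castAdd k i))) =
      WithLp.toLp 2 (fun j : Fin k => z (Fin.natAdd n j))}

/-- A finite Whitney (a)-regular stratification of `X ⊆ ℝⁿ`: a finite partition of `X`
into smooth submanifolds such that whenever tangent spaces along a sequence in a stratum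
`S_j` converge to a subspace `T` at a point `x` of a stratum `S_i`, one has `T_x S_i ⊆ T`. -/
structure WhitneyStratification (n : ℕ) (X : Set (Euc n)) where
  ι : Type
  instFin : Finite ι
  stratum : ι → Set (Euc n)
  dim : ι → ℕ
  dim_le : ∀ i, dim i ≤ n
  disj : Pairwise fun i j => Disjoint (stratum i) (stratum j)
  cover : ⋃ i, stratum i = X
  subman : ∀ i, IsSubmanifoldCodim (stratum i) (n - dim i)
  condA : ∀ i j, ∀ x ∈ stratum i, ∀ y : ℕ → Euc n, (∀ m, y m ∈ stratum j) →
    Tendsto y atTop (𝓝 x) →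
    ∀ T : Submodule ℝ (Euc n), finrank ℝ T = dim j →
      (∀ v ∈ T, ∃ u : ℕ → Euc n, (∀ m, u m ∈ tangentSpaceAt (stratum j) (y m)) ∧
        Tendsto u atTop (𝓝 v)) →
      tangentSpaceAt (stratum i) x ≤ T

/-- The set of stratified critical points of `f` restricted to (a stratum) `S`:
points where the differential of `f` is not surjective on the tangent space. -/
def stratCrit {n k : ℕ} (f : Euc n → Euc k) (S : Set (Euc n)) : Set (Euc n) :=
  {x ∈ S | ¬ Function.Surjective fun v : tangentSpaceAt S x => fderiv ℝ f x (v : Euc n)}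

/-- The polar variety of the orthogonal projection `π_P` restricted to `S` (of
dimension `d`): the set of `x ∈ S` with `dim (T_x S ∩ P^⊥) ≥ d - k + 1`
(stated additively to avoid truncated subtraction; for `k > d` this is all of `S`). -/
def polarVariety {n : ℕ} (S : Set (Euc n)) (d k : ℕ) (P : Submodule ℝ (Euc n)) :
    Set (Euc n) :=
  {x ∈ S | d + 1 ≤ finrank ℝ ↥(tangentSpaceAt S x ⊓ Pᗮ) + k}

/-- Orthogonal projection onto `P`, viewed as a self-map of `ℝⁿ`. -/
def projMap {n : ℕ} (P : Submodule ℝ (Euc n)) (x : Euc n) : Euc n :=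
  (orthogonalProjection P x : Euc n)

/-- The Grassmannian of `k`-dimensional linear subspaces of `ℝⁿ`. -/
def Grass (n k : ℕ) : Type := {P : Submodule ℝ (Euc n) // finrank ℝ P = k}

instance {n k : ℕ} : MeasurableSpace (Grass n k) := ⊤

/-- Action of a linear isometry of `ℝⁿ` on the Grassmannian. -/
def Grass.rot {n k : ℕ} (g : Euc n ≃ₗᵢ[ℝ] Euc n) (P : Grass n k) : Grass n k :=
  ⟨P.1.map (g.toLinearEquiv : Euc n →ₗ[ℝ] Euc n), by
    rw [LinearEquiv.finrank_map_eq]; exact P.2⟩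

/-- `β(a,b) = Γ((b+1)/2)Γ((a−b+1)/2)/(Γ(1/2)Γ((a+1)/2))`. -/
def betaC (a b : ℕ) : ℝ :=
  (Real.Gamma (((b : ℝ) + 1) / 2) * Real.Gamma (((a : ℝ) - (b : ℝ) + 1) / 2)) /
    (Real.Gamma (1 / 2) * Real.Gamma (((a : ℝ) + 1) / 2))

/-- The fold locus `Σ_P^{S,0}` of `π_P|_S`: for `k ≤ d` the set of fold points, for
`k = d + 1` the set of regular (immersion) points of `π_P|_S`. -/
def foldLocus {n : ℕ} (S : Set (Euc n)) (d k : ℕ) (P : Submodule ℝ (Euc n)) :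
    Set (Euc n) :=
  if k ≤ d then
    {x ∈ S | finrank ℝ ↥(tangentSpaceAt S x ⊓ Pᗮ) + k = d + 1 ∧
      finrank ℝ ↥(tangentSpaceAt (polarVariety S d k P) x ⊓ Pᗮ) = 0}
  else {x ∈ S | finrank ℝ ↥(tangentSpaceAt S x ⊓ Pᗮ) = 0}


section Aux

theorem tangent_eq_ker {n c : ℕ} {S : Set (Euc n)} (h : IsSubmanifoldCodim S c)
    {y : Euc n} (hy : y ∈ S) :
    ∃ D : Euc n →L[ℝ] Euc c, Function.Surjective D ∧
      tangentSpaceAt S y = D.ker := by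
  obtain ⟨g, U, hUo, hyU, hg, hgs, hSU⟩ := h y hy
  have hgy : g y = 0 := by
    have : y ∈ S ∩ U := ⟨hy, hyU⟩
    rw [hSU] at this
    exact this.2
  set D := fderiv ℝ g y with hD
  have hst : HasStrictFDerivAt g D y :=
    (hg.contDiffAt (hUo.mem_nhds hyU)).hasStrictFDerivAt (by simp)
  have hsurj : Function.Surjective D := hgs y hyU
  have hrange : D.range = ⊤ := LinearMap.range_eq_top.2 hsurj
  refine ⟨D, hsurj, le_antisymm ?_ ?_⟩
  · rw [tangentSpaceAt, Submodule.span_le]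
    intro v hv
    rw [← tangentConeAt_inter_nhds (hUo.mem_nhds hyU)] at hv
    obtain ⟨cc, dd, clim, dtop, cdlim⟩ := mem_tangentConeAt_iff_exists_seq.1 hv
    have hlim := (hst.hasFDerivAt.hasFDerivWithinAt (s := S ∩ U)).lim clim dtop cdlim
    have hz : ∀ᶠ m in atTop, cc m • (g (y + dd m) - g y) = 0 := by
      filter_upwards [dtop] with m hm
      have : g (y + dd m) = 0 := by
        have := hSU ▸ hm
        exact this.2
      rw [this, hgy, sub_zero, smul_zero]
    have : Tendsto (fun m => cc m • (g (y + dd m) - g y)) atTop (𝓝 0) :=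
      Tendsto.congr' (hz.mono fun m hm => hm.symm) tendsto_const_nhds
    have := tendsto_nhds_unique hlim this
    exact LinearMap.mem_ker.2 this
  · intro v hv
    apply Submodule.subset_span
    set v' : D.ker := ⟨v, hv⟩ with hv'
    set ψ : ℝ → Euc n := fun t => hst.implicitFunction g D hrange 0 (t • v') with hψ
    have hψ0 : ψ 0 = y := by
      simp only [hψ, zero_smul]
      rw [← hgy]
      exact hst.implicitFunction_apply_image hrange
    have hder : HasDerivAt ψ v 0 := by
      have h1 : HasStrictFDerivAt (hst.implicitFunction g D hrange (g y))
          (D.ker).subtypeL 0 := hst.to_implicitFunction hrange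
      rw [hgy] at h1
      have h2 : HasDerivAt (fun t : ℝ => t • v') v' 0 := by
        simpa using (hasDerivAt_id (0:ℝ)).smul_const v'
      have h1' : HasFDerivAt (hst.implicitFunction g D hrange 0)
          (D.ker).subtypeL ((0:ℝ) • v') := by
        rw [zero_smul]; exact h1.hasFDerivAt
      have h3 := h1'.comp_hasDerivAt (f := fun t : ℝ => t • v') 0 h2
      exact h3
    have hmem : ∀ᶠ t in 𝓝 (0:ℝ), ψ t ∈ S := by
      have h1 : ∀ᶠ p : Euc c × D.ker in 𝓝 (g y, 0),
          g (hst.implicitFunction g D hrange p.1 p.2) = p.1 :=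
        hst.map_implicitFunction_eq hrange
      rw [hgy] at h1
      have h2 : Tendsto (fun t : ℝ => ((0 : Euc c), t • v')) (𝓝 0) (𝓝 (0, 0)) := by
        refine Tendsto.prodMk_nhds tendsto_const_nhds ?_
        have h0 : Tendsto (fun t : ℝ => t • v') (𝓝 0) (𝓝 ((0:ℝ) • v')) :=
          (continuous_id.smul (continuous_const (y := v'))).tendsto (0:ℝ)
        simpa only [zero_smul] using h0
      have h3 : ∀ᶠ t in 𝓝 (0:ℝ), g (ψ t) = 0 := h2.eventually h1
      have h4 : ∀ᶠ t in 𝓝 (0:ℝ), ψ t ∈ U := by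
        have : Tendsto ψ (𝓝 0) (𝓝 y) := by
          rw [← hψ0]; exact hder.continuousAt.tendsto
        exact this.eventually (hUo.eventually_mem hyU)
      filter_upwards [h3, h4] with t h3 h4
      have : ψ t ∈ S ∩ U := by rw [hSU]; exact ⟨h4, h3⟩
      exact this.1
    refine mem_tangentConeAt_iff_exists_seq_norm_tendsto_atTop.2
      ⟨fun m => (m : ℝ) + 1, fun m => ψ (((m:ℝ)+1)⁻¹) - y, ?_, ?_, ?_⟩
    swap
    · have htend : Tendsto (fun m : ℕ => ((m:ℝ)+1)⁻¹) atTop (𝓝 0) :=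
        tendsto_one_div_add_atTop_nhds_zero_nat.congr (by intro m; rw [one_div])
      filter_upwards [htend.eventually hmem] with m hm
      simpa [add_sub_cancel] using hm
    · have : Tendsto (fun m : ℕ => (m:ℝ)+1) atTop atTop :=
        tendsto_atTop_add_const_right atTop 1 tendsto_natCast_atTop_atTop
      refine this.congr fun m => ?_
      rw [Real.norm_eq_abs, abs_of_pos (by positivity)]
    · have hslope := hasDerivAt_iff_tendsto_slope.1 hder
      have htend : Tendsto (fun m : ℕ => ((m:ℝ)+1)⁻¹) atTop (𝓝[≠] 0) := by
        apply tendsto_nhdsWithin_of_tendsto_nhds_of_eventually_within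
        · exact tendsto_one_div_add_atTop_nhds_zero_nat.congr (by intro m; rw [one_div])
        · filter_upwards with m
          simp only [mem_compl_iff, mem_singleton_iff]
          positivity
      have := hslope.comp htend
      refine this.congr fun m => ?_
      simp [slope_def_field, slope, hψ0, div_eq_inv_mul]

theorem tangent_finrank {n c : ℕ} {S : Set (Euc n)} (h : IsSubmanifoldCodim S c)
    {y : Euc n} (hy : y ∈ S) :
    finrank ℝ (tangentSpaceAt S y) + c = n := by
  obtain ⟨D, hsurj, hker⟩ := tangent_eq_ker h hy
  rw [hker]
  have h1 := LinearMap.finrank_range_add_finrank_ker (D : Euc n →ₗ[ℝ] Euc c)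
  have h2 : LinearMap.range (D : Euc n →ₗ[ℝ] Euc c) = ⊤ := LinearMap.range_eq_top.2 hsurj
  rw [h2, finrank_top] at h1
  have h3 : finrank ℝ (Euc c) = c := finrank_euclideanSpace_fin
  have h4 : finrank ℝ (Euc n) = n := finrank_euclideanSpace_fin
  have h5 : LinearMap.ker (D : Euc n →ₗ[ℝ] Euc c) = D.ker := rfl
  rw [h5] at h1
  omega

end Aux

/-- For a compact Whitney (a)-regular stratified set `X ⊆ ℝⁿ` and a
smooth map `f` which is a submersion on a neighborhood of `X`, the set of stratified
critical points of `f|_X` is closed, hence compact, and contained in `X`. -/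
theorem statement_0 {n k : ℕ} (X : Set (Euc n)) (hX : IsCompact X)
    (𝒮 : WhitneyStratification n X)
    (f : Euc n → Euc k) (hf : ContDiff ℝ (⊤ : ℕ∞) f)
    (hsub : ∃ V : Set (Euc n), IsOpen V ∧ X ⊆ V ∧
      ∀ x ∈ V, Function.Surjective (fderiv ℝ f x)) :
    (⋃ i, stratCrit f (𝒮.stratum i)) ⊆ X ∧
    IsClosed (⋃ i, stratCrit f (𝒮.stratum i)) ∧
    IsCompact (⋃ i, stratCrit f (𝒮.stratum i)) := by
  haveI := 𝒮.instFin
  have hsubX : (⋃ i, stratCrit f (𝒮.stratum i)) ⊆ X := by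
    intro x hx
    obtain ⟨i, hi⟩ := mem_iUnion.1 hx
    rw [← 𝒮.cover]
    exact mem_iUnion.2 ⟨i, hi.1⟩
  have key : IsSeqClosed (⋃ i, stratCrit f (𝒮.stratum i)) := by
    intro u p hu hup
    have hpX : p ∈ X :=
      hX.isClosed.mem_of_tendsto hup (Eventually.of_forall fun m => hsubX (hu m))
    obtain ⟨j, hj⟩ : ∃ j, ∃ᶠ m in atTop, u m ∈ stratCrit f (𝒮.stratum j) := by
      by_contra hcon
      push_neg at hcon
      have hev : ∀ᶠ m in atTop, ∀ j, u m ∉ stratCrit f (𝒮.stratum j) := by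
        rw [eventually_all]
        intro j
        simpa [Filter.not_frequently] using hcon j
      obtain ⟨m, hm⟩ := hev.exists
      obtain ⟨i, hi⟩ := mem_iUnion.1 (hu m)
      exact hm i hi
    obtain ⟨φ, hφmono, hφ⟩ := extraction_of_frequently_atTop hj
    set y : ℕ → Euc n := u ∘ φ with hydef
    have hytend : Tendsto y atTop (𝓝 p) := hup.comp hφmono.tendsto_atTop
    have hyS : ∀ m, y m ∈ 𝒮.stratum j := fun m => (hφ m).1
    set d := 𝒮.dim j with hd
    have hrank : ∀ m, finrank ℝ (tangentSpaceAt (𝒮.stratum j) (y m)) = d := by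
      intro m
      have h1 := tangent_finrank (𝒮.subman j) (hyS m)
      have h2 := 𝒮.dim_le j
      omega
    have hE : ∀ m, ∃ e : Fin d → Euc n, Orthonormal ℝ e ∧
        ∀ l, e l ∈ tangentSpaceAt (𝒮.stratum j) (y m) := by
      intro m
      have hr := hrank m
      set b := stdOrthonormalBasis ℝ (tangentSpaceAt (𝒮.stratum j) (y m)) with hb
      refine ⟨fun l => (b (Fin.cast hr.symm l) : Euc n), ?_, fun l => (b _).2⟩
      rw [orthonormal_iff_ite]
      intro a c
      have h1 := orthonormal_iff_ite.1 b.orthonormal (Fin.cast hr.symm a) (Fin.cast hr.symm c)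
      rw [Submodule.coe_inner] at h1
      rw [h1]
      simp [Fin.ext_iff]
    choose e he hemem using hE
    have hW : ∀ m, ∃ w : Euc k, ‖w‖ = 1 ∧
        ∀ v ∈ tangentSpaceAt (𝒮.stratum j) (y m), ⟪w, fderiv ℝ f (y m) v⟫ = 0 := by
      intro m
      have hcrit := (hφ m).2
      set R := Submodule.map ((fderiv ℝ f (y m)) : Euc n →ₗ[ℝ] Euc k)
        (tangentSpaceAt (𝒮.stratum j) (y m)) with hR
      have hRtop : R ≠ ⊤ := by
        intro htop
        apply hcrit
        intro bb
        have hb : bb ∈ R := htop ▸ Submodule.mem_top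
        obtain ⟨v, hvT, hvb⟩ := hb
        exact ⟨⟨v, hvT⟩, hvb⟩
      have hbot : Rᗮ ≠ ⊥ := fun hcon => hRtop (Submodule.orthogonal_eq_bot_iff.1 hcon)
      obtain ⟨w0, hw0R, hw0⟩ := Submodule.exists_mem_ne_zero_of_ne_bot hbot
      refine ⟨‖w0‖⁻¹ • w0, norm_smul_inv_norm hw0, ?_⟩
      intro v hvT
      have hmem : fderiv ℝ f (y m) v ∈ R := Submodule.mem_map_of_mem hvT
      have hw0R' : ‖w0‖⁻¹ • w0 ∈ Rᗮ := Submodule.smul_mem _ _ hw0R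
      have h0 := (Submodule.mem_orthogonal R (‖w0‖⁻¹ • w0)).1 hw0R' _ hmem
      rw [real_inner_comm]
      exact h0
    choose w hw1 hw2 using hW
    have hK : IsCompact ((Set.univ.pi fun _ : Fin d => Metric.closedBall (0:Euc n) 1) ×ˢ
        Metric.closedBall (0:Euc k) 1) :=
      (isCompact_univ_pi fun _ => isCompact_closedBall _ _).prod (isCompact_closedBall _ _)
    have hmemK : ∀ m, ((fun l => e m l, w m) : (Fin d → Euc n) × Euc k) ∈
        ((Set.univ.pi fun _ : Fin d => Metric.closedBall (0:Euc n) 1) ×ˢ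
          Metric.closedBall (0:Euc k) 1) := by
      intro m
      constructor
      · intro l _
        simp [mem_closedBall, dist_eq_norm, (he m).1 l]
      · simp [mem_closedBall, dist_eq_norm, hw1 m]
    obtain ⟨q, hqK, σ, hσmono, hσ⟩ := hK.tendsto_subseq hmemK
    obtain ⟨ε, wlim⟩ := q
    have hεlim : ∀ l, Tendsto (fun m => e (σ m) l) atTop (𝓝 (ε l)) := by
      intro l
      exact (((continuous_apply l).comp continuous_fst).tendsto _).comp hσ
    have hwlim : Tendsto (fun m => w (σ m)) atTop (𝓝 wlim) :=
      (continuous_snd.tendsto _).comp hσ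
    have hwnorm : ‖wlim‖ = 1 := by
      have h1 : Tendsto (fun _ : ℕ => (1:ℝ)) atTop (𝓝 ‖wlim‖) := by
        simpa [hw1] using hwlim.norm
      exact tendsto_nhds_unique h1 tendsto_const_nhds
    have hεon : Orthonormal ℝ ε := by
      rw [orthonormal_iff_ite]
      intro a b
      have h1 : Tendsto (fun m => ⟪e (σ m) a, e (σ m) b⟫) atTop (𝓝 ⟪ε a, ε b⟫) :=
        (hεlim a).inner (hεlim b)
      have h2 : (fun m => ⟪e (σ m) a, e (σ m) b⟫) =
          fun _ => if a = b then (1:ℝ) else 0 := by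
        funext m; exact orthonormal_iff_ite.1 (he (σ m)) a b
      rw [h2] at h1
      exact tendsto_nhds_unique h1 tendsto_const_nhds
    set T := Submodule.span ℝ (Set.range ε) with hT
    have hTrank : finrank ℝ T = d := by
      rw [hT, finrank_span_eq_card hεon.linearIndependent]
      simp
    have happrox : ∀ v ∈ T, ∃ uu : ℕ → Euc n,
        (∀ m, uu m ∈ tangentSpaceAt (𝒮.stratum j) ((y ∘ σ) m)) ∧
        Tendsto uu atTop (𝓝 v) := by
      intro v hv
      obtain ⟨cf, hcf⟩ := mem_span_range_iff_exists_fun ℝ |>.1 hv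
      refine ⟨fun m => ∑ l, cf l • e (σ m) l,
        fun m => Submodule.sum_smul_mem _ _ (fun l _ => hemem (σ m) l), ?_⟩
      rw [← hcf]
      exact tendsto_finset_sum _ fun l _ => (hεlim l).const_smul _
    have hpX' : p ∈ ⋃ i, 𝒮.stratum i := by rw [𝒮.cover]; exact hpX
    obtain ⟨i, hpi⟩ := mem_iUnion.1 hpX'
    have hle : tangentSpaceAt (𝒮.stratum i) p ≤ T :=
      𝒮.condA i j p hpi (y ∘ σ) (fun m => hyS (σ m))
        (hytend.comp hσmono.tendsto_atTop) T hTrank happrox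
    have hvan : ∀ v ∈ T, ⟪wlim, fderiv ℝ f p v⟫ = 0 := by
      have hgen : ∀ l, ⟪wlim, fderiv ℝ f p (ε l)⟫ = 0 := by
        intro l
        have h1 : Tendsto (fun m => fderiv ℝ f ((y ∘ σ) m)) atTop (𝓝 (fderiv ℝ f p)) :=
          ((hf.continuous_fderiv (by simp)).tendsto p).comp (hytend.comp hσmono.tendsto_atTop)
        have h2 : Tendsto (fun m => (fderiv ℝ f (y (σ m))) (e (σ m) l)) atTop
            (𝓝 (fderiv ℝ f p (ε l))) :=
          (isBoundedBilinearMap_apply.continuous.tendsto _).comp (h1.prodMk_nhds (hεlim l))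
        have h3 : Tendsto (fun m => ⟪w (σ m), fderiv ℝ f (y (σ m)) (e (σ m) l)⟫) atTop
            (𝓝 ⟪wlim, fderiv ℝ f p (ε l)⟫) := hwlim.inner h2
        have h4 : (fun m => ⟪w (σ m), fderiv ℝ f (y (σ m)) (e (σ m) l)⟫) =
            fun _ => (0:ℝ) := by
          funext m
          exact hw2 (σ m) _ (hemem (σ m) l)
        rw [h4] at h3
        exact tendsto_nhds_unique h3 tendsto_const_nhds
      intro v hv
      have hker : T ≤ LinearMap.ker (((innerSL ℝ wlim).comp (fderiv ℝ f p)) :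
          Euc n →ₗ[ℝ] ℝ) := by
        rw [hT, Submodule.span_le]
        rintro _ ⟨l, rfl⟩
        simp only [SetLike.mem_coe, LinearMap.mem_ker, ContinuousLinearMap.coe_coe,
          ContinuousLinearMap.comp_apply, innerSL_apply_apply]
        exact hgen l
      have := hker hv
      simpa using this
    refine mem_iUnion.2 ⟨i, hpi, ?_⟩
    intro hsurj2
    obtain ⟨v, hv⟩ := hsurj2 wlim
    have h0 : ⟪wlim, wlim⟫ = 0 := by
      have hv' : fderiv ℝ f p (v : Euc n) = wlim := hv
      have hq := hvan (v : Euc n) (hle v.2)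
      rwa [hv'] at hq
    rw [real_inner_self_eq_norm_sq, hwnorm] at h0
    norm_num at h0
  have hclosed : IsClosed (⋃ i, stratCrit f (𝒮.stratum i)) := key.isClosed
  exact ⟨hsubX, hclosed, hX.of_isClosed_subset hclosed hsubX⟩
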